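/- Let H be a 2-graph with Euler characteristic χ(H) = 0 (for example a discrete 2-torus) and let G = H ⊕ K₁ be the cone over H, obtained by adding one apex vertex p joined by an edge to every vertex of H. Then G is contractible, χ(G) = 1, G is not a 3-graph (the unit sphere of p is H, which is not a 2-sphere), and every locally injective function on the vertices of G has more than two critical points. -/

import Mathlib

attribute [local instance] Classical.propDecidable

noncomputable section

/-- A finite simple graph on a vertex type `V`: a finite vertex set together with a
symmetric, irreflexive adjacency relation supported on the vertex set. -/
structure FSGraph (V : Type) where
  verts : Finset V
  Adj : V → V → Prop
  symm : ∀ {a b}, Adj a b → Adj b a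
  loopless : ∀ a, ¬ Adj a a
  supp : ∀ {a b}, Adj a b → a ∈ verts ∧ b ∈ verts

namespace FSGraph

variable {V : Type}

/-- The subgraph induced by the set of vertices satisfying `P`. -/
def induce (G : FSGraph V) (P : V → Prop) : FSGraph V where
  verts := G.verts.filter P
  Adj a b := G.Adj a b ∧ P a ∧ P b
  symm h := ⟨G.symm h.1, h.2.2, h.2.1⟩
  loopless a h := G.loopless a h.1
  supp h := ⟨Finset.mem_filter.mpr ⟨(G.supp h.1).1, h.2.1⟩,
             Finset.mem_filter.mpr ⟨(G.supp h.1).2, h.2.2⟩⟩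

/-- The unit sphere `S(x)`: the subgraph induced by the neighbours of `x`. -/
def sphere (G : FSGraph V) (x : V) : FSGraph V := G.induce (fun y => G.Adj x y)

/-- `G - x`: the subgraph induced by all vertices different from `x`. -/
def remove (G : FSGraph V) (x : V) : FSGraph V := G.induce (fun y => y ≠ x)

/-- Contractibility (in the sense of Evako/Knill): the one-point graph `K₁` is
contractible, and a graph is contractible if some vertex `x` has both `S(x)` and
`G - x` contractible.  The empty graph is not contractible. -/
inductive Contractible : FSGraph V → Prop
  | single (G : FSGraph V) (x : V) (h : G.verts = {x}) : Contractible G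
  | step (G : FSGraph V) (x : V) (hx : x ∈ G.verts)
      (hS : Contractible (G.sphere x)) (hR : Contractible (G.remove x)) :
      Contractible G

/-- `IsSphere d G`: `G` is a `d`-sphere.  The empty graph is the `(-1)`-sphere; for
`d ≥ 0`, a `d`-sphere is a nonempty graph all of whose unit spheres are
`(d-1)`-spheres (i.e. a `d`-graph) which becomes contractible after removing some
vertex. -/
inductive IsSphere : ℤ → FSGraph V → Prop
  | empty (G : FSGraph V) (h : G.verts = ∅) : IsSphere (-1) G
  | succ (d : ℤ) (G : FSGraph V) (hd : 0 ≤ d) (hne : G.verts.Nonempty)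
      (hunit : ∀ x ∈ G.verts, IsSphere (d - 1) (G.sphere x))
      (hpunct : ∃ x ∈ G.verts, Contractible (G.remove x)) :
      IsSphere d G

/-- A `d`-graph: a nonempty graph all of whose unit spheres are `(d-1)`-spheres. -/
def IsDGraph (d : ℤ) (G : FSGraph V) : Prop :=
  G.verts.Nonempty ∧ ∀ x ∈ G.verts, IsSphere (d - 1) (G.sphere x)

/-- A `d`-ball: a graph of the form `G - x` with `G` a `d`-sphere and `x` a vertex. -/
def IsBall (d : ℤ) (B : FSGraph V) : Prop :=
  ∃ (G : FSGraph V) (x : V), IsSphere d G ∧ x ∈ G.verts ∧ B = G.remove x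

/-- `f` is locally injective (a coloring): adjacent vertices get different values. -/
def LocallyInjective (G : FSGraph V) (f : V → ℝ) : Prop :=
  ∀ a b, G.Adj a b → f a ≠ f b

/-- `S_f^-(x)`: the subgraph of `S(x)` induced by `{y ∈ S(x) : f y < f x}`. -/
def subSphere (G : FSGraph V) (f : V → ℝ) (x : V) : FSGraph V :=
  (G.sphere x).induce (fun y => f y < f x)

/-- `S_f^+(x)`: the subgraph of `S(x)` induced by `{y ∈ S(x) : f y > f x}`. -/
def supSphere (G : FSGraph V) (f : V → ℝ) (x : V) : FSGraph V :=
  (G.sphere x).induce (fun y => f x < f y)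

/-- `x` is a critical point of `f` if at least one of `S_f^-(x)`, `S_f^+(x)` is
not contractible. -/
def IsCritical (G : FSGraph V) (f : V → ℝ) (x : V) : Prop :=
  ¬ Contractible (G.subSphere f x) ∨ ¬ Contractible (G.supSphere f x)

/-- `f` has exactly two critical points on the vertex set of `G`. -/
def ExactlyTwoCriticalPoints (G : FSGraph V) (f : V → ℝ) : Prop :=
  ∃ a b, a ∈ G.verts ∧ b ∈ G.verts ∧ a ≠ b ∧
    G.IsCritical f a ∧ G.IsCritical f b ∧
    ∀ x ∈ G.verts, G.IsCritical f x → x = a ∨ x = b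

/-- A simplex of `G`: a nonempty complete subgraph, given by its vertex set. -/
def IsSimplex (G : FSGraph V) (s : Finset V) : Prop :=
  s.Nonempty ∧ s ⊆ G.verts ∧ ∀ a ∈ s, ∀ b ∈ s, a ≠ b → G.Adj a b

/-- The finite set of simplices (nonempty complete subgraphs) of `G`. -/
def simplices (G : FSGraph V) : Finset (Finset V) :=
  G.verts.powerset.filter (fun s => G.IsSimplex s)

/-- The Barycentric refinement `G'`: vertices are the simplices of `G`, two simplices
being adjacent when one is a proper subset of the other. -/
def barycentric (G : FSGraph V) : FSGraph (Finset V) where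
  verts := G.simplices
  Adj s t := G.IsSimplex s ∧ G.IsSimplex t ∧ (s ⊂ t ∨ t ⊂ s)
  symm h := ⟨h.2.1, h.1, h.2.2.symm⟩
  loopless s h := by
    rcases h.2.2 with h' | h' <;> exact ssubset_irrefl s h'
  supp {s t} h :=
    ⟨Finset.mem_filter.mpr ⟨Finset.mem_powerset.mpr h.1.2.1, h.1⟩,
     Finset.mem_filter.mpr ⟨Finset.mem_powerset.mpr h.2.1.2.1, h.2.1⟩⟩

/-- The level surface `{f = c}` in the Barycentric refinement `G'`: the subgraph of
`G'` induced by the simplices on which `f - c` takes both positive and negative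
values. -/
def levelSurface (G : FSGraph V) (f : V → ℝ) (c : ℝ) : FSGraph (Finset V) :=
  G.barycentric.induce (fun s => (∃ a ∈ s, f a < c) ∧ (∃ b ∈ s, c < f b))

/-- `{f ≤ c}` in `G'`: the subgraph of `G'` induced by the simplices on which `f < c`
everywhere, together with those on which `f - c` takes both signs. -/
def subLevel (G : FSGraph V) (f : V → ℝ) (c : ℝ) : FSGraph (Finset V) :=
  G.barycentric.induce
    (fun s => (∀ a ∈ s, f a < c) ∨ ((∃ a ∈ s, f a < c) ∧ (∃ b ∈ s, c < f b)))

/-- `{f ≥ c}` in `G'`: the subgraph of `G'` induced by the simplices on which `f > c`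
everywhere, together with those on which `f - c` takes both signs. -/
def supLevel (G : FSGraph V) (f : V → ℝ) (c : ℝ) : FSGraph (Finset V) :=
  G.barycentric.induce
    (fun s => (∀ a ∈ s, c < f a) ∨ ((∃ a ∈ s, f a < c) ∧ (∃ b ∈ s, c < f b)))

/-- The center manifold `B_f(x) = {f = f x}` inside the Barycentric refinement
`S(x)'` of the unit sphere `S(x)`. -/
def centerManifold (G : FSGraph V) (f : V → ℝ) (x : V) : FSGraph (Finset V) :=
  (G.sphere x).levelSurface f (f x)

/-- Euler characteristic: `χ(G) = Σ_k (-1)^k c_k(G)` where `c_k(G)` counts the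
complete subgraphs with `k+1` vertices; equivalently the sum of `(-1)^(|s|-1)` over
all simplices `s`. -/
def euler (G : FSGraph V) : ℤ :=
  ∑ s ∈ G.simplices, (-1 : ℤ) ^ (s.card - 1)

end FSGraph

/-- The cone `H ⊕ K₁` over a graph `H`, obtained by adding one apex vertex `p`
joined by an edge to every vertex of `H`. -/
def FSGraph.cone {V : Type} (H : FSGraph V) (p : V) (hp : p ∉ H.verts) :
    FSGraph V where
  verts := insert p H.verts
  Adj a b := H.Adj a b ∨ (a = p ∧ b ∈ H.verts) ∨ (b = p ∧ a ∈ H.verts)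
  symm {a b} h := by
    rcases h with h | ⟨rfl, h⟩ | ⟨rfl, h⟩
    · exact Or.inl (H.symm h)
    · exact Or.inr (Or.inr ⟨rfl, h⟩)
    · exact Or.inr (Or.inl ⟨rfl, h⟩)
  loopless a h := by
    rcases h with h | ⟨rfl, h⟩ | ⟨rfl, h⟩
    · exact H.loopless a h
    · exact hp h
    · exact hp h
  supp {a b} h := by
    rcases h with h | ⟨rfl, h⟩ | ⟨rfl, h⟩
    · exact ⟨Finset.mem_insert_of_mem (H.supp h).1,
        Finset.mem_insert_of_mem (H.supp h).2⟩
    · exact ⟨Finset.mem_insert_self _ _, Finset.mem_insert_of_mem h⟩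
    · exact ⟨Finset.mem_insert_of_mem h, Finset.mem_insert_self _ _⟩

/-!
Removing a base vertex `x` from the cone `G = H ⊕ K₁` leaves the cone over `H - x`, and `S(x)` is
the cone over the unit sphere of `x` in `H`, so cones are contractible by induction. Contractible
graphs have `χ = 1` and `d`-spheres have `χ = 1 + (-1)^d`, so `S(p) = H` is not a `2`-sphere.

If `f` had at most two critical points, they would be its global minimum and maximum. If the apex
is the maximum (or, replacing `f` by `-f`, the minimum), then every vertex of `H` other than the
minimum has the same contractible lower sphere in `H` as in `G`, and the Morse formula
`χ(H) = ∑ₓ (1 - χ(S_f⁻(x)))` gives `χ(H) = 1`. Otherwise the apex is regular, so `{f < f p}` and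
`{f > f p}` are contractible subgraphs of `H`. In a `2`-graph the simplices meeting both sides are
edges and triangles; each such edge lies in exactly two triangles (its link is a `0`-sphere) and
each such triangle has exactly two such edges, so they cancel in `χ(H)` and `χ(H) = 1 + 1 = 2`.
-/

namespace FSGraph

variable {V : Type}

open Finset

theorem ext {G₁ G₂ : FSGraph V} (hv : G₁.verts = G₂.verts)
    (hadj : ∀ a b, G₁.Adj a b ↔ G₂.Adj a b) : G₁ = G₂ := by
  cases G₁; cases G₂
  obtain rfl := hv
  obtain rfl : _ = _ := funext fun a => funext fun b => propext (hadj a b)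
  rfl

theorem ne_of_adj {G : FSGraph V} {a b : V} (h : G.Adj a b) : a ≠ b := by
  rintro rfl; exact G.loopless a h

section Induce

variable {G : FSGraph V} {P Q : V → Prop}

@[simp]
theorem mem_verts_induce {x : V} : x ∈ (G.induce P).verts ↔ x ∈ G.verts ∧ P x :=
  mem_filter

@[simp]
theorem adj_induce {a b : V} : (G.induce P).Adj a b ↔ G.Adj a b ∧ P a ∧ P b :=
  Iff.rfl

theorem induce_congr (h : ∀ x ∈ G.verts, P x ↔ Q x) : G.induce P = G.induce Q :=
  ext (filter_congr h) fun a b => by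
    simp only [adj_induce]
    exact ⟨fun ⟨hab, ha, hb⟩ => ⟨hab, (h a (G.supp hab).1).1 ha, (h b (G.supp hab).2).1 hb⟩,
      fun ⟨hab, ha, hb⟩ => ⟨hab, (h a (G.supp hab).1).2 ha, (h b (G.supp hab).2).2 hb⟩⟩

theorem induce_eq_self (h : ∀ x ∈ G.verts, P x) : G.induce P = G :=
  ext (filter_true_of_mem h) fun _ _ =>
    ⟨fun h => h.1, fun hab => ⟨hab, h _ (G.supp hab).1, h _ (G.supp hab).2⟩⟩

theorem induce_induce : (G.induce P).induce Q = G.induce (fun y => P y ∧ Q y) :=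
  ext (by ext; simp [and_assoc]) fun _ _ => by simp only [adj_induce]; tauto

@[simp]
theorem mem_verts_sphere {x y : V} : y ∈ (G.sphere x).verts ↔ y ∈ G.verts ∧ G.Adj x y :=
  mem_filter

@[simp]
theorem adj_sphere {x a b : V} : (G.sphere x).Adj a b ↔ G.Adj a b ∧ G.Adj x a ∧ G.Adj x b :=
  Iff.rfl

theorem verts_remove {x : V} : (G.remove x).verts = G.verts.erase x := by
  ext; simp [remove, and_comm]

end Induce

theorem Contractible.nonempty {G : FSGraph V} (h : Contractible G) : G.verts.Nonempty := by
  cases h with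
  | single G x h => exact ⟨x, by simp [h]⟩
  | step G x hx _ _ => exact ⟨x, hx⟩

theorem Contractible.card_eq_one_of_forall_not_adj {G : FSGraph V} (h : Contractible G)
    (hG : ∀ a b, ¬ G.Adj a b) : G.verts.card = 1 := by
  cases h with
  | single G x h => simp [h]
  | step G x _ hS _ =>
    obtain ⟨y, hy⟩ := hS.nonempty
    exact absurd (mem_verts_induce.1 hy).2 (hG x y)

theorem IsSphere.isSphere_sphere {d : ℤ} {G : FSGraph V} (h : IsSphere d G) {x : V}
    (hx : x ∈ G.verts) : IsSphere (d - 1) (G.sphere x) := by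
  cases h with
  | empty G h => simp [h] at hx
  | succ d G _ _ hunit _ => exact hunit x hx

theorem IsSphere.verts_eq_empty {G : FSGraph V} (h : IsSphere (-1) G) : G.verts = ∅ := by
  cases h with
  | empty G h => exact h
  | succ d G hd _ _ _ => omega

theorem IsSphere.not_adj_of_zero {G : FSGraph V} (h : IsSphere 0 G) (a b : V) :
    ¬ G.Adj a b := fun hab => by
  have hempty := (h.isSphere_sphere (G.supp hab).1).verts_eq_empty
  have hb : b ∈ (G.sphere a).verts := mem_verts_sphere.2 ⟨(G.supp hab).2, hab⟩
  simp [hempty] at hb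

theorem IsSphere.card_verts_of_zero {G : FSGraph V} (h : IsSphere 0 G) : G.verts.card = 2 := by
  have hG := h.not_adj_of_zero
  cases h with
  | succ d G _ _ _ hpunct =>
    obtain ⟨x, hx, hc⟩ := hpunct
    have h1 := hc.card_eq_one_of_forall_not_adj fun a b hab => hG a b hab.1
    rw [verts_remove, card_erase_of_mem hx] at h1
    omega

section Simplices

variable {K : FSGraph V}

theorem mem_simplices {s : Finset V} : s ∈ K.simplices ↔ K.IsSimplex s := by
  simp only [simplices, mem_filter, mem_powerset, and_iff_right_iff_imp]
  exact fun h => h.2.1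

theorem mem_simplices_of_subset {s t : Finset V} (hs : s ∈ K.simplices) (hts : t ⊆ s)
    (ht : t.Nonempty) : t ∈ K.simplices := by
  obtain ⟨-, hsv, hsa⟩ := mem_simplices.1 hs
  exact mem_simplices.2 ⟨ht, hts.trans hsv, fun a ha b hb => hsa a (hts ha) b (hts hb)⟩

theorem insert_mem_simplices {x : V} {t : Finset V} (hx : x ∈ K.verts)
    (ht : t = ∅ ∨ t ∈ K.simplices) (hxt : ∀ y ∈ t, K.Adj x y) :
    insert x t ∈ K.simplices := by
  have htv : t ⊆ K.verts := by
    rcases ht with rfl | ht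
    exacts [empty_subset _, (mem_simplices.1 ht).2.1]
  refine mem_simplices.2 ⟨insert_nonempty x t, insert_subset hx htv, ?_⟩
  simp only [mem_insert]
  rintro a (rfl | ha) b (rfl | hb) hab
  · exact absurd rfl hab
  · exact hxt b hb
  · exact K.symm (hxt a ha)
  · rcases ht with rfl | ht
    exacts [absurd ha (notMem_empty a), (mem_simplices.1 ht).2.2 a ha b hb hab]

theorem mem_simplices_induce {P : V → Prop} {s : Finset V} :
    s ∈ (K.induce P).simplices ↔ s ∈ K.simplices ∧ ∀ y ∈ s, P y := by
  simp only [mem_simplices, IsSimplex, subset_iff, mem_verts_induce, adj_induce]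
  constructor
  · rintro ⟨hne, hv, ha⟩
    exact ⟨⟨hne, fun y hy => (hv hy).1, fun a h b h' hab => (ha a h b h' hab).1⟩,
      fun y hy => (hv hy).2⟩
  · rintro ⟨⟨hne, hv, ha⟩, hP⟩
    exact ⟨hne, fun y hy => ⟨hv hy, hP y hy⟩,
      fun a h b h' hab => ⟨ha a h b h' hab, hP a h, hP b h'⟩⟩

theorem euler_eq_zero_of_verts_eq_empty (h : K.verts = ∅) : K.euler = 0 := by
  have : K.simplices = ∅ := by
    simp only [simplices, h, powerset_empty]
    exact filter_eq_empty_iff.2 fun s hs hs' => by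
      rw [mem_singleton.1 hs] at hs'; exact not_nonempty_empty hs'.1
  simp [euler, this]

theorem sum_star_eq_one_sub_euler {x : V} {P : V → Prop} (hx : x ∈ K.verts)
    (hP : ∀ y, P y → K.Adj x y) :
    ∑ s ∈ K.simplices with x ∈ s ∧ ∀ y ∈ s.erase x, P y, (-1 : ℤ) ^ (s.card - 1) =
      1 - (K.induce P).euler := by
  have hxP : ¬ P x := fun h => K.loopless x (hP x h)
  have hx_notMem : ∀ t ∈ insert ∅ (K.induce P).simplices, x ∉ t := by
    simp only [mem_insert, mem_simplices_induce]
    rintro t (rfl | ⟨-, ht⟩) hxt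
    exacts [notMem_empty x hxt, hxP (ht x hxt)]
  have hrhs : 1 - (K.induce P).euler =
      ∑ t ∈ insert ∅ (K.induce P).simplices, (-1 : ℤ) ^ t.card := by
    rw [sum_insert fun h => not_nonempty_empty (mem_simplices.1 h).1, euler, card_empty,
      pow_zero, sub_eq_add_neg, ← sum_neg_distrib]
    congr 1
    refine sum_congr rfl fun t ht => ?_
    obtain ⟨n, hn⟩ := Nat.exists_eq_add_one.2 (card_pos.2 (mem_simplices.1 ht).1)
    rw [hn, Nat.add_sub_cancel, pow_succ]
    ring
  rw [hrhs]
  refine sum_nbij' (fun s => s.erase x) (fun t => insert x t) ?_ ?_ ?_ ?_ ?_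
  · simp only [mem_filter, mem_insert, mem_simplices_induce]
    rintro s ⟨hs, -, hsP⟩
    rcases (s.erase x).eq_empty_or_nonempty with he | hne
    exacts [Or.inl he, Or.inr ⟨mem_simplices_of_subset hs (erase_subset x s) hne, hsP⟩]
  · intro t ht
    have ht' : t = ∅ ∨ t ∈ K.simplices := by
      rcases mem_insert.1 ht with rfl | ht
      exacts [Or.inl rfl, Or.inr (mem_simplices_induce.1 ht).1]
    have htP : ∀ y ∈ t, P y := by
      rcases mem_insert.1 ht with rfl | ht
      exacts [fun y hy => absurd hy (notMem_empty y), (mem_simplices_induce.1 ht).2]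
    refine mem_filter.2 ⟨insert_mem_simplices hx ht' fun y hy => hP y (htP y hy),
      mem_insert_self x t, ?_⟩
    rwa [erase_insert (hx_notMem t ht)]
  · intro s hs
    exact insert_erase (mem_filter.1 hs).2.1
  · intro t ht
    exact erase_insert (hx_notMem t ht)
  · intro s hs
    rw [card_erase_of_mem (mem_filter.1 hs).2.1]

end Simplices

section Euler

variable {K : FSGraph V}

theorem euler_eq_euler_remove_add {x : V} (hx : x ∈ K.verts) :
    K.euler = (K.remove x).euler + (1 - (K.sphere x).euler) := by
  have hstar : K.simplices.filter (fun s => x ∈ s) =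
      K.simplices.filter (fun s => x ∈ s ∧ ∀ y ∈ s.erase x, K.Adj x y) :=
    filter_congr fun s hs => ⟨fun hxs => ⟨hxs, fun y hy =>
      K.symm ((mem_simplices.1 hs).2.2 y (mem_of_mem_erase hy) x hxs (ne_of_mem_erase hy))⟩,
      And.left⟩
  have hrest : K.simplices.filter (fun s => x ∉ s) = (K.remove x).simplices := by
    ext s
    simp only [remove, mem_filter, mem_simplices_induce]
    exact and_congr_right fun _ => ⟨fun h y hy hyx => h (hyx ▸ hy), fun h hxs => h x hxs rfl⟩
  rw [euler, ← sum_filter_add_sum_filter_not _ (fun s => x ∈ s), hstar,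
    sum_star_eq_one_sub_euler hx fun _ h => h, hrest, add_comm]
  rfl

theorem euler_eq_one_of_verts_eq_singleton {x : V} (h : K.verts = {x}) : K.euler = 1 := by
  have hx : x ∈ K.verts := h ▸ mem_singleton_self x
  have hsphere : (K.sphere x).verts = ∅ :=
    eq_empty_of_forall_notMem fun y hy => by
      obtain ⟨hy, hxy⟩ := mem_verts_induce.1 hy
      rw [h, mem_singleton] at hy
      exact K.loopless x (hy ▸ hxy)
  have hremove : (K.remove x).verts = ∅ := by rw [verts_remove, h, erase_singleton]
  rw [euler_eq_euler_remove_add hx, euler_eq_zero_of_verts_eq_empty hsphere,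
    euler_eq_zero_of_verts_eq_empty hremove]
  rfl

theorem Contractible.euler_eq_one (h : Contractible K) : K.euler = 1 := by
  induction h with
  | single G x hx => exact euler_eq_one_of_verts_eq_singleton hx
  | step G x hx _ _ ihS ihR => rw [euler_eq_euler_remove_add hx, ihS, ihR]; rfl

theorem IsSphere.euler_eq {d : ℤ} (h : IsSphere d K) : K.euler = if Even d then 2 else 0 := by
  induction h with
  | empty G hG => rw [euler_eq_zero_of_verts_eq_empty hG]; decide
  | succ d G _ _ _ hpunct ih =>
    obtain ⟨x, hx, hc⟩ := hpunct
    rw [euler_eq_euler_remove_add hx, hc.euler_eq_one, ih x hx]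
    by_cases hd : Even d <;> simp [hd, ← Int.not_even_iff_odd]

end Euler

section Morse

variable {K : FSGraph V} {f : V → ℝ}

theorem subSphere_eq_induce (x : V) :
    K.subSphere f x = K.induce (fun y => K.Adj x y ∧ f y < f x) :=
  induce_induce

theorem euler_eq_sum_one_sub_euler_subSphere (hf : K.LocallyInjective f) :
    K.euler = ∑ x ∈ K.verts, (1 - (K.subSphere f x).euler) := by
  -- group the simplices by the vertex where `f` is largest, unique by local injectivity
  let top (x : V) : Finset (Finset V) :=
    K.simplices.filter fun s => x ∈ s ∧ ∀ y ∈ s.erase x, K.Adj x y ∧ f y < f x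
  have hcover : K.simplices = K.verts.biUnion top := by
    ext s
    simp only [top, mem_biUnion, mem_filter]
    refine ⟨fun hs => ?_, fun ⟨_, _, hs, _⟩ => hs⟩
    obtain ⟨hne, hsv, hsa⟩ := mem_simplices.1 hs
    obtain ⟨u, hu, hmax⟩ := s.exists_max_image f hne
    refine ⟨u, hsv hu, hs, hu, fun y hy => ?_⟩
    have hadj := hsa u hu y (mem_of_mem_erase hy) (ne_of_mem_erase hy).symm
    exact ⟨hadj, (hmax y (mem_of_mem_erase hy)).lt_of_ne (hf u y hadj).symm⟩
  have hdisj : (K.verts : Set V).PairwiseDisjoint top := by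
    intro x _ x' _ hxx'
    simp only [top, Function.onFun, disjoint_left, mem_filter]
    rintro s ⟨-, hxs, hs⟩ ⟨-, hx's, hs'⟩
    exact (hs x' (mem_erase.2 ⟨hxx'.symm, hx's⟩)).2.asymm
      (hs' x (mem_erase.2 ⟨hxx', hxs⟩)).2
  rw [euler, hcover, sum_biUnion hdisj]
  refine sum_congr rfl fun x hx => ?_
  rw [subSphere_eq_induce, ← sum_star_eq_one_sub_euler hx fun _ h => h.1]
  exact sum_congr (by simp only [top]; congr) fun _ _ => rfl

theorem euler_eq_one_of_contractible_subSphere (hf : K.LocallyInjective f) {m : V}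
    (hm : m ∈ K.verts) (hmin : ∀ y ∈ K.verts, f m ≤ f y)
    (hreg : ∀ x ∈ K.verts, x ≠ m → Contractible (K.subSphere f x)) : K.euler = 1 := by
  have hm_empty : (K.subSphere f m).verts = ∅ := by
    refine eq_empty_of_forall_notMem fun y hy => ?_
    rw [subSphere_eq_induce, mem_verts_induce] at hy
    exact (hmin y hy.1).not_gt hy.2.2
  rw [euler_eq_sum_one_sub_euler_subSphere hf, sum_eq_single_of_mem m hm fun x hx hxm => by
    rw [(hreg x hx hxm).euler_eq_one, sub_self], euler_eq_zero_of_verts_eq_empty hm_empty,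
    sub_zero]

end Morse

section Critical

variable {G : FSGraph V} {f : V → ℝ}

theorem LocallyInjective.neg (hf : G.LocallyInjective f) : G.LocallyInjective (-f) :=
  fun a b hab h => hf a b hab (neg_inj.1 h)

theorem isCritical_neg {x : V} : G.IsCritical (-f) x ↔ G.IsCritical f x := by
  simp only [IsCritical, subSphere, supSphere, Pi.neg_apply, neg_lt_neg_iff]
  exact or_comm

theorem isCritical_of_forall_le {x : V} (hx : ∀ y ∈ G.verts, f x ≤ f y) :
    G.IsCritical f x := by
  refine Or.inl fun hc => ?_
  obtain ⟨y, hy⟩ := hc.nonempty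
  simp only [subSphere, sphere, mem_verts_induce] at hy
  exact (hx y hy.1.1).not_gt hy.2

theorem isCritical_of_forall_ge {x : V} (hx : ∀ y ∈ G.verts, f y ≤ f x) :
    G.IsCritical f x :=
  isCritical_neg.1 (isCritical_of_forall_le fun y hy => neg_le_neg (hx y hy))

theorem not_isCritical_of_card_le_two
    (hle : (G.verts.filter fun x => G.IsCritical f x).card ≤ 2) {a b x : V}
    (ha : a ∈ G.verts) (hb : b ∈ G.verts) (hac : G.IsCritical f a) (hbc : G.IsCritical f b)
    (hab : a ≠ b) (hx : x ∈ G.verts) (hxa : x ≠ a) (hxb : x ≠ b) : ¬ G.IsCritical f x :=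
    fun hxc => by
  have hsub : {a, b} ⊆ G.verts.filter fun x => G.IsCritical f x := by
    simp [insert_subset_iff, ha, hb, hac, hbc]
  replace hx : x ∈ G.verts.filter fun x => G.IsCritical f x := mem_filter.2 ⟨hx, hxc⟩
  rw [← eq_of_subset_of_card_le hsub (hle.trans (card_pair hab).ge)] at hx
  simp [hxa, hxb] at hx

theorem not_isCritical_of_lt_of_lt
    (hle : (G.verts.filter fun x => G.IsCritical f x).card ≤ 2) {l u x : V}
    (hl : l ∈ G.verts) (hu : u ∈ G.verts) (hx : x ∈ G.verts) (hlx : f l < f x) (hxu : f x < f u) :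
    ¬ G.IsCritical f x := by
  obtain ⟨a, ha, hamin⟩ := G.verts.exists_min_image f ⟨l, hl⟩
  obtain ⟨b, hb, hbmax⟩ := G.verts.exists_max_image f ⟨l, hl⟩
  have hax : f a < f x := (hamin l hl).trans_lt hlx
  have hxb : f x < f b := hxu.trans_le (hbmax u hu)
  exact not_isCritical_of_card_le_two hle ha hb (isCritical_of_forall_le hamin)
    (isCritical_of_forall_ge hbmax) (fun h => (hax.trans hxb).ne (congrArg f h)) hx
    (fun h => hax.ne' (congrArg f h)) (fun h => hxb.ne (congrArg f h))

end Critical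

section Cone

variable {H : FSGraph V} {p : V} (hp : p ∉ H.verts)

theorem cone_adj_apex {y : V} : (H.cone p hp).Adj p y ↔ y ∈ H.verts := by
  refine ⟨?_, fun hy => Or.inr (Or.inl ⟨rfl, hy⟩)⟩
  rintro (h | ⟨-, h⟩ | ⟨-, h⟩)
  exacts [absurd (H.supp h).1 hp, h, absurd h hp]

theorem cone_adj_of_ne {a b : V} (ha : a ≠ p) (hb : b ≠ p) :
    (H.cone p hp).Adj a b ↔ H.Adj a b := by
  refine ⟨?_, Or.inl⟩
  rintro (h | ⟨rfl, -⟩ | ⟨rfl, -⟩)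
  exacts [h, absurd rfl ha, absurd rfl hb]

theorem induce_cone_of_not {P : V → Prop} (hP : ¬ P p) :
    (H.cone p hp).induce P = H.induce P := by
  refine ext ?_ fun a b => ?_
  · ext y
    simp only [mem_verts_induce, cone, mem_insert]
    exact ⟨fun ⟨hy, hPy⟩ => ⟨hy.resolve_left (by rintro rfl; exact hP hPy), hPy⟩,
      fun ⟨hy, hPy⟩ => ⟨Or.inr hy, hPy⟩⟩
  · simp only [adj_induce]
    refine ⟨fun ⟨hab, ha, hb⟩ => ⟨?_, ha, hb⟩, fun ⟨hab, ha, hb⟩ => ⟨Or.inl hab, ha, hb⟩⟩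
    exact (cone_adj_of_ne hp (by rintro rfl; exact hP ha) (by rintro rfl; exact hP hb)).1 hab

theorem induce_cone_of_pos {P : V → Prop} (hP : P p) :
    (H.cone p hp).induce P = (H.induce P).cone p fun h => hp (mem_verts_induce.1 h).1 := by
  refine ext ?_ fun a b => ?_
  · ext y
    simp only [mem_verts_induce, cone, mem_insert]
    exact ⟨fun ⟨hy, hPy⟩ => hy.imp_right fun hy => ⟨hy, hPy⟩,
      fun h => h.elim (fun h => ⟨Or.inl h, h ▸ hP⟩) fun h => ⟨Or.inr h.1, h.2⟩⟩
  · simp only [cone, adj_induce, mem_verts_induce]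
    constructor
    · rintro ⟨h | ⟨rfl, hb⟩ | ⟨rfl, ha⟩, hPa, hPb⟩
      exacts [Or.inl ⟨h, hPa, hPb⟩, Or.inr (Or.inl ⟨rfl, hb, hPb⟩),
        Or.inr (Or.inr ⟨rfl, ha, hPa⟩)]
    · rintro (⟨h, hPa, hPb⟩ | ⟨rfl, hb, hPb⟩ | ⟨rfl, ha, hPa⟩)
      exacts [⟨Or.inl h, hPa, hPb⟩, ⟨Or.inr (Or.inl ⟨rfl, hb⟩), hP, hPb⟩,
        ⟨Or.inr (Or.inr ⟨rfl, ha⟩), hPa, hP⟩]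

theorem sphere_cone_apex : (H.cone p hp).sphere p = H := by
  rw [sphere, induce_cone_of_not hp ((H.cone p hp).loopless p)]
  exact induce_eq_self fun y hy => (cone_adj_apex hp).2 hy

theorem sphere_cone_of_mem {x : V} (hx : x ∈ H.verts) :
    (H.cone p hp).sphere x = (H.sphere x).cone p fun h => hp (mem_verts_sphere.1 h).1 := by
  have hxp : (H.cone p hp).Adj x p := (H.cone p hp).symm ((cone_adj_apex hp).2 hx)
  rw [sphere, induce_cone_of_pos hp hxp]
  congr 1
  refine induce_congr fun y hy => cone_adj_of_ne hp ?_ ?_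
  exacts [ne_of_mem_of_not_mem hx hp, ne_of_mem_of_not_mem hy hp]

theorem remove_cone_of_mem {x : V} (hx : x ∈ H.verts) :
    (H.cone p hp).remove x = (H.remove x).cone p fun h => hp (mem_verts_induce.1 h).1 :=
  induce_cone_of_pos hp (ne_of_mem_of_not_mem hx hp).symm

theorem subSphere_cone_apex (f : V → ℝ) :
    (H.cone p hp).subSphere f p = H.induce fun y => f y < f p := by
  rw [subSphere, sphere_cone_apex]

theorem supSphere_cone_apex (f : V → ℝ) :
    (H.cone p hp).supSphere f p = H.induce fun y => f p < f y := by
  rw [supSphere, sphere_cone_apex]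

theorem subSphere_cone_of_lt {f : V → ℝ} {x : V} (hx : x ∈ H.verts) (hxp : f x < f p) :
    (H.cone p hp).subSphere f x = H.subSphere f x := by
  rw [subSphere, sphere_cone_of_mem hp hx,
    induce_cone_of_not (P := fun y => f y < f x) _ hxp.not_gt]
  rfl

end Cone

theorem contractible_cone (H : FSGraph V) (p : V) (hp : p ∉ H.verts) :
    Contractible (H.cone p hp) := by
  rcases H.verts.eq_empty_or_nonempty with h | ⟨x, hx⟩
  · exact .single _ p (by simp [cone, h])
  · have hcard : ∀ {P : V → Prop}, ¬ P x → (H.induce P).verts.card < H.verts.card :=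
      fun hPx => card_lt_card (filter_ssubset.2 ⟨x, hx, hPx⟩)
    refine .step _ x (mem_insert_of_mem hx) ?_ ?_
    · rw [sphere_cone_of_mem hp hx]
      have := hcard (H.loopless x)
      exact contractible_cone _ p _
    · rw [remove_cone_of_mem hp hx]
      have := hcard (P := fun y => y ≠ x) (not_not.2 rfl)
      exact contractible_cone _ p _
termination_by H.verts.card

section TwoGraph

variable {H : FSGraph V}

theorem pair_mem_simplices {x y : V} (hxy : H.Adj x y) : {x, y} ∈ H.simplices :=
  insert_mem_simplices (H.supp hxy).1
    (Or.inr (by simpa using insert_mem_simplices (H.supp hxy).2 (Or.inl rfl) (by simp)))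
    (by simpa using hxy)

theorem IsDGraph.isSphere_link (hH : IsDGraph 2 H) {x y : V} (hxy : H.Adj x y) :
    IsSphere 0 ((H.sphere x).sphere y) := by
  have h1 : IsSphere 1 (H.sphere x) := by simpa using hH.2 x (H.supp hxy).1
  simpa using h1.isSphere_sphere (mem_verts_sphere.2 ⟨(H.supp hxy).2, hxy⟩)

theorem IsDGraph.card_le_three (hH : IsDGraph 2 H) {s : Finset V} (hs : s ∈ H.simplices) :
    s.card ≤ 3 := by
  by_contra! h
  have hsa := (mem_simplices.1 hs).2.2
  obtain ⟨x, hx, y, hy, hxy⟩ := one_lt_card.1 (by omega : 1 < s.card)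
  have hcard : 1 < ((s.erase x).erase y).card := by
    rw [card_erase_of_mem (mem_erase.2 ⟨hxy.symm, hy⟩), card_erase_of_mem hx]; omega
  obtain ⟨z, hz, w, hw, hzw⟩ := one_lt_card.1 hcard
  simp only [mem_erase] at hz hw
  obtain ⟨hzy, hzx, hz⟩ := hz
  obtain ⟨hwy, hwx, hw⟩ := hw
  refine (hH.isSphere_link (hsa x hx y hy hxy)).not_adj_of_zero z w ⟨⟨?_, ?_, ?_⟩, ⟨?_, ?_, ?_⟩,
    ⟨?_, ?_, ?_⟩⟩
  all_goals exact hsa _ ‹_› _ ‹_› (by first | assumption | exact Ne.symm ‹_›)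

/-- The triangles through an edge `xy` are the joins of `xy` with the two points of its link. -/
theorem IsDGraph.card_triangles_of_adj (hH : IsDGraph 2 H) {x y : V} (hxy : H.Adj x y) :
    (H.simplices.filter fun t => t.card = 3 ∧ {x, y} ⊆ t).card = 2 := by
  have hlink : ∀ z, z ∈ ((H.sphere x).sphere y).verts ↔ z ∈ H.verts ∧ H.Adj x z ∧ H.Adj y z := by
    simp only [mem_verts_sphere, adj_sphere]
    tauto
  have hnot : ∀ z ∈ ((H.sphere x).sphere y).verts, z ∉ ({x, y} : Finset V) := by
    intro z hz hzxy
    obtain ⟨-, hxz, hyz⟩ := (hlink z).1 hz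
    rcases mem_insert.1 hzxy with rfl | hzy
    exacts [H.loopless z hxz, H.loopless z (mem_singleton.1 hzy ▸ hyz)]
  rw [← (hH.isSphere_link hxy).card_verts_of_zero]
  symm
  refine card_nbij (fun z => insert z {x, y}) (fun z hz => ?_) (fun z hz z' _ h => ?_)
    (fun t ht => ?_)
  · obtain ⟨hzv, hxz, hyz⟩ := (hlink z).1 hz
    refine mem_filter.2 ⟨insert_mem_simplices hzv (Or.inr (pair_mem_simplices hxy)) ?_, ?_,
      subset_insert _ _⟩
    · simpa using ⟨H.symm hxz, H.symm hyz⟩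
    · rw [card_insert_of_notMem (hnot z hz), card_pair (H.ne_of_adj hxy)]
  · have h : insert z ({x, y} : Finset V) = insert z' {x, y} := h
    have : z ∈ insert z' ({x, y} : Finset V) := h ▸ mem_insert_self z _
    exact (mem_insert.1 this).resolve_right (hnot z hz)
  · obtain ⟨hts, ht3, hxyt⟩ := mem_filter.1 ht
    obtain ⟨z, hz⟩ := card_eq_one.1 (by
      rw [card_sdiff_of_subset hxyt, ht3, card_pair (H.ne_of_adj hxy)] : (t \ {x, y}).card = 1)
    obtain ⟨-, -, hsa⟩ := mem_simplices.1 hts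
    obtain ⟨hzt, hzxy⟩ := mem_sdiff.1 (hz ▸ mem_singleton_self z : z ∈ t \ {x, y})
    have hx : x ∈ t := hxyt (mem_insert_self x _)
    have hy : y ∈ t := hxyt (by simp)
    refine ⟨z, (hlink z).2 ⟨(H.supp (hsa x hx z hzt ?_)).2, hsa x hx z hzt ?_, hsa y hy z hzt ?_⟩,
      show insert z _ = t by rw [insert_eq, ← hz, sdiff_union_of_subset hxyt]⟩
    all_goals rintro rfl; simp at hzxy

end TwoGraph

section LevelSurface

variable {f : V → ℝ} {c : ℝ}

def Straddles (f : V → ℝ) (c : ℝ) (s : Finset V) : Prop :=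
  (∃ a ∈ s, f a < c) ∧ ∃ b ∈ s, c < f b

theorem Straddles.mono {s t : Finset V} (h : Straddles f c s) (hst : s ⊆ t) :
    Straddles f c t :=
  ⟨h.1.imp fun _ ⟨ha, h⟩ => ⟨hst ha, h⟩, h.2.imp fun _ ⟨hb, h⟩ => ⟨hst hb, h⟩⟩

theorem Straddles.one_lt_card {s : Finset V} (h : Straddles f c s) : 1 < s.card :=
  let ⟨⟨a, ha, hac⟩, ⟨b, hb, hbc⟩⟩ := h
  Finset.one_lt_card.2 ⟨a, ha, b, hb, fun h => (hac.trans hbc).ne (congrArg f h)⟩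

theorem card_powersetCard_two_filter_straddles (t : Finset V) :
    ((t.powersetCard 2).filter (Straddles f c)).card =
      (t.filter (f · < c)).card * (t.filter (c < f ·)).card := by
  rw [← card_product]
  symm
  refine card_nbij (fun q => {q.1, q.2}) (fun q hq => ?_) (fun q hq q' hq' h => ?_)
    (fun e he => ?_)
  · obtain ⟨⟨hl, hlc⟩, ⟨hu, huc⟩⟩ : (q.1 ∈ t ∧ f q.1 < c) ∧ q.2 ∈ t ∧ c < f q.2 := by
      simpa using hq
    refine mem_filter.2 ⟨mem_powersetCard.2 ⟨?_, card_pair ?_⟩, ⟨q.1, ?_, hlc⟩, ⟨q.2, ?_, huc⟩⟩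
    · simp [insert_subset_iff, hl, hu]
    · exact fun h => (hlc.trans huc).ne (congrArg f h)
    · simp
    · simp
  · simp only [coe_product, Set.mem_prod, mem_coe, mem_filter] at hq hq'
    have h : ({q.1, q.2} : Finset V) = {q'.1, q'.2} := h
    have h1 : q.1 ∈ ({q'.1, q'.2} : Finset V) := h ▸ mem_insert_self _ _
    have h2 : q.2 ∈ ({q'.1, q'.2} : Finset V) := h ▸ by simp
    simp only [mem_insert, mem_singleton] at h1 h2
    refine Prod.ext (h1.resolve_right ?_) (h2.resolve_left ?_)
    · rintro h; exact (hq.1.2.trans hq'.2.2).not_ge (h ▸ le_rfl)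
    · rintro h; exact (hq'.1.2.trans hq.2.2).not_ge (h ▸ le_rfl)
  · obtain ⟨he2, ⟨a, ha, hac⟩, ⟨b, hb, hbc⟩⟩ := mem_filter.1 he
    obtain ⟨het, hcard⟩ := mem_powersetCard.1 he2
    have hab : a ≠ b := fun h => (hac.trans hbc).ne (congrArg f h)
    refine ⟨(a, b), by simp [het ha, het hb, hac, hbc], ?_⟩
    exact eq_of_subset_of_card_le (by simp [insert_subset_iff, ha, hb])
      (by rw [hcard, card_pair hab])

theorem card_powersetCard_two_filter_straddles_of_card_eq_three {t : Finset V} (ht : t.card = 3)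
    (hst : Straddles f c t) (hc : ∀ v ∈ t, f v ≠ c) :
    ((t.powersetCard 2).filter (Straddles f c)).card = 2 := by
  have hsplit : (t.filter (f · < c)).card + (t.filter (c < f ·)).card = 3 := by
    have hne : t.filter (c < f ·) = t.filter fun v => ¬ f v < c :=
      filter_congr fun v hv => ⟨fun h => h.not_gt, fun h => (not_lt.1 h).lt_of_ne' (hc v hv)⟩
    rw [hne, card_filter_add_card_filter_not, ht]
  have hlo : 0 < (t.filter (f · < c)).card := by
    obtain ⟨a, ha, hac⟩ := hst.1; exact card_pos.2 ⟨a, mem_filter.2 ⟨ha, hac⟩⟩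
  have hhi : 0 < (t.filter (c < f ·)).card := by
    obtain ⟨b, hb, hbc⟩ := hst.2; exact card_pos.2 ⟨b, mem_filter.2 ⟨hb, hbc⟩⟩
  rw [card_powersetCard_two_filter_straddles]
  obtain h | h : (t.filter (f · < c)).card = 1 ∨ (t.filter (f · < c)).card = 2 := by omega
  all_goals rw [h] at hsplit ⊢; omega

variable {H : FSGraph V}

theorem mem_verts_levelSurface {s : Finset V} :
    s ∈ (H.levelSurface f c).verts ↔ s ∈ H.simplices ∧ Straddles f c s :=
  mem_verts_induce

theorem euler_eq_add_sum_levelSurface (hc : ∀ v ∈ H.verts, f v ≠ c) :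
    H.euler = (H.induce (f · < c)).euler + (H.induce (c < f ·)).euler +
      ∑ s ∈ (H.levelSurface f c).verts, (-1 : ℤ) ^ (s.card - 1) := by
  have hlo : H.simplices.filter (fun s => ∀ v ∈ s, f v < c) = (H.induce (f · < c)).simplices := by
    ext s; rw [mem_simplices_induce, mem_filter]
  have hhi : (H.simplices.filter fun s => ¬ ∀ v ∈ s, f v < c).filter (fun s => ∀ v ∈ s, c < f v) =
      (H.induce (c < f ·)).simplices := by
    ext s
    rw [mem_simplices_induce, filter_filter, mem_filter]
    refine and_congr_right fun hs => ⟨And.right, fun hhi => ⟨fun hlo => ?_, hhi⟩⟩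
    obtain ⟨v, hv⟩ := (mem_simplices.1 hs).1
    exact (hlo v hv).asymm (hhi v hv)
  have hmid : (H.simplices.filter fun s => ¬ ∀ v ∈ s, f v < c).filter
      (fun s => ¬ ∀ v ∈ s, c < f v) = (H.levelSurface f c).verts := by
    ext s
    rw [mem_verts_levelSurface, filter_filter, mem_filter]
    refine and_congr_right fun hs => ?_
    have hcs : ∀ v ∈ s, f v ≠ c := fun v hv => hc v ((mem_simplices.1 hs).2.1 hv)
    simp only [Straddles, not_forall, not_lt]
    exact ⟨fun ⟨⟨b, hb, hbc⟩, ⟨a, ha, hac⟩⟩ => ⟨⟨a, ha, hac.lt_of_ne (hcs a ha)⟩,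
      ⟨b, hb, hbc.lt_of_ne' (hcs b hb)⟩⟩,
      fun ⟨⟨a, ha, hac⟩, ⟨b, hb, hbc⟩⟩ => ⟨⟨b, hb, hbc.le⟩, ⟨a, ha, hac.le⟩⟩⟩
  rw [euler, ← sum_filter_add_sum_filter_not _ (fun s => ∀ v ∈ s, f v < c), hlo,
    ← sum_filter_add_sum_filter_not (H.simplices.filter fun s => ¬ ∀ v ∈ s, f v < c)
      (fun s => ∀ v ∈ s, c < f v), hhi, hmid, add_assoc]
  rfl

theorem IsDGraph.sum_levelSurface_eq_zero (hH : IsDGraph 2 H) (hc : ∀ v ∈ H.verts, f v ≠ c) :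
    ∑ s ∈ (H.levelSurface f c).verts, (-1 : ℤ) ^ (s.card - 1) = 0 := by
  set M := (H.levelSurface f c).verts
  have hM : ∀ {s}, s ∈ M ↔ s ∈ H.simplices ∧ Straddles f c s := mem_verts_levelSurface
  have hcard : ∀ s ∈ M, s.card = 2 ∨ s.card = 3 := fun s hs => by
    have := (hM.1 hs).2.one_lt_card
    have := hH.card_le_three (hM.1 hs).1
    omega
  set E := M.filter (·.card = 2)
  set T := M.filter (·.card = 3)
  have hsum : ∑ s ∈ M, (-1 : ℤ) ^ (s.card - 1) = T.card - E.card := by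
    rw [← sum_filter_add_sum_filter_not M (·.card = 2),
      filter_congr fun s hs => ⟨(hcard s hs).resolve_left, fun h => by omega⟩,
      sum_congr rfl fun s (hs : s ∈ E) => by rw [(mem_filter.1 hs).2],
      sum_congr rfl fun s (hs : s ∈ T) => by rw [(mem_filter.1 hs).2]]
    simp only [sum_const, nsmul_eq_mul]
    ring
  have hE : ∀ e ∈ E, (T.bipartiteAbove (· ⊆ ·) e).card = 2 := by
    intro e he
    obtain ⟨heM, he2⟩ := mem_filter.1 he
    obtain ⟨hes, hestr⟩ := hM.1 heM
    obtain ⟨x, y, hxy, rfl⟩ := card_eq_two.1 he2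
    rw [← hH.card_triangles_of_adj ((mem_simplices.1 hes).2.2 x (by simp) y (by simp) hxy)]
    congr 1
    ext t
    simp only [bipartiteAbove, T, mem_filter, hM]
    exact ⟨fun ⟨⟨⟨ht, _⟩, h3⟩, hsub⟩ => ⟨ht, h3, hsub⟩,
      fun ⟨ht, h3, hsub⟩ => ⟨⟨⟨ht, hestr.mono hsub⟩, h3⟩, hsub⟩⟩
  have hT : ∀ t ∈ T, (E.bipartiteBelow (· ⊆ ·) t).card = 2 := by
    intro t ht
    obtain ⟨htM, ht3⟩ := mem_filter.1 ht
    obtain ⟨hts, htstr⟩ := hM.1 htM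
    rw [← card_powersetCard_two_filter_straddles_of_card_eq_three ht3 htstr
      fun v hv => hc v ((mem_simplices.1 hts).2.1 hv)]
    congr 1
    ext e
    simp only [bipartiteBelow, E, mem_filter, hM, mem_powersetCard]
    refine ⟨fun ⟨⟨⟨_, h⟩, h2⟩, hsub⟩ => ⟨⟨hsub, h2⟩, h⟩, fun ⟨⟨hsub, h2⟩, h⟩ => ?_⟩
    exact ⟨⟨⟨mem_simplices_of_subset hts hsub (card_pos.1 (by omega)), h⟩, h2⟩, hsub⟩
  have := card_mul_eq_card_mul (fun e t : Finset V => e ⊆ t) hE hT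
  rw [hsum]
  omega

theorem IsDGraph.euler_eq_two_of_contractible (hH : IsDGraph 2 H) (hc : ∀ v ∈ H.verts, f v ≠ c)
    (hlo : Contractible (H.induce (f · < c))) (hhi : Contractible (H.induce (c < f ·))) :
    H.euler = 2 := by
  rw [euler_eq_add_sum_levelSurface hc, hlo.euler_eq_one, hhi.euler_eq_one,
    hH.sum_levelSurface_eq_zero hc]
  rfl

end LevelSurface

section CriticalCone

variable {H : FSGraph V} {p : V} (hp : p ∉ H.verts) {f : V → ℝ}

theorem euler_eq_one_of_card_isCritical_cone_le_two (hf : (H.cone p hp).LocallyInjective f)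
    (hH : H.verts.Nonempty) (hmax : ∀ x ∈ H.verts, f x < f p)
    (hle : ((H.cone p hp).verts.filter fun x => (H.cone p hp).IsCritical f x).card ≤ 2) :
    H.euler = 1 := by
  obtain ⟨m, hm, hmin⟩ := H.verts.exists_min_image f hH
  have hmc : (H.cone p hp).IsCritical f m := isCritical_of_forall_le fun y hy => by
    rcases mem_insert.1 hy with rfl | hy
    exacts [(hmax m hm).le, hmin y hy]
  have hpc : (H.cone p hp).IsCritical f p := isCritical_of_forall_ge fun y hy => by
    rcases mem_insert.1 hy with rfl | hy
    exacts [le_rfl, (hmax y hy).le]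
  refine euler_eq_one_of_contractible_subSphere (fun a b hab => hf a b (Or.inl hab)) hm hmin
    fun x hx hxm => ?_
  have hreg := not_isCritical_of_card_le_two hle (mem_insert_of_mem hm) (mem_insert_self p _)
    hmc hpc (ne_of_mem_of_not_mem hm hp) (mem_insert_of_mem hx) hxm (ne_of_mem_of_not_mem hx hp)
  rw [← subSphere_cone_of_lt hp hx (hmax x hx)]
  exact not_not.1 (not_or.1 hreg).1

theorem two_lt_card_isCritical_cone (hH : IsDGraph 2 H) (h1 : H.euler ≠ 1) (h2 : H.euler ≠ 2)
    (hf : (H.cone p hp).LocallyInjective f) :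
    2 < ((H.cone p hp).verts.filter fun x => (H.cone p hp).IsCritical f x).card := by
  by_contra! hle
  by_cases hmax : ∀ x ∈ H.verts, f x < f p
  · exact h1 (euler_eq_one_of_card_isCritical_cone_le_two hp hf hH.1 hmax hle)
  by_cases hmin : ∀ x ∈ H.verts, f p < f x
  · refine h1 (euler_eq_one_of_card_isCritical_cone_le_two hp hf.neg hH.1 (by simpa using hmin) ?_)
    simpa only [isCritical_neg] using hle
  push Not at hmax hmin
  obtain ⟨u, hu, hpu⟩ := hmax
  obtain ⟨l, hl, hlp⟩ := hmin
  have hne : ∀ v ∈ H.verts, f v ≠ f p := fun v hv h => hf p v ((cone_adj_apex hp).2 hv) h.symm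
  have hreg := not_isCritical_of_lt_of_lt hle (mem_insert_of_mem hl) (mem_insert_of_mem hu)
    (mem_insert_self p _) (hlp.lt_of_ne (hne l hl)) (hpu.lt_of_ne' (hne u hu))
  rw [IsCritical, subSphere_cone_apex, supSphere_cone_apex, not_or, not_not, not_not] at hreg
  exact h2 (hH.euler_eq_two_of_contractible hne hreg.1 hreg.2)

end CriticalCone

end FSGraph

/-- Let `H` be a `2`-graph with `χ(H) = 0` (e.g. a discrete `2`-torus) and let
`G = H ⊕ K₁` be the cone over `H` with apex `p`.  Then `G` is contractible,
`χ(G) = 1`, `G` is not a `3`-graph, and every locally injective function on the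
vertices of `G` has more than two critical points. -/
theorem cone_over_torus {V : Type} (H : FSGraph V) (p : V) (hp : p ∉ H.verts)
    (hH : FSGraph.IsDGraph 2 H) (hchi : H.euler = 0) :
    FSGraph.Contractible (FSGraph.cone H p hp) ∧
      (FSGraph.cone H p hp).euler = 1 ∧
      ¬ FSGraph.IsDGraph 3 (FSGraph.cone H p hp) ∧
      ∀ f : V → ℝ, (FSGraph.cone H p hp).LocallyInjective f →
        2 < ((FSGraph.cone H p hp).verts.filter
          (fun x => (FSGraph.cone H p hp).IsCritical f x)).card := by
  refine ⟨FSGraph.contractible_cone H p hp, (FSGraph.contractible_cone H p hp).euler_eq_one,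
    fun h3 => ?_, fun f hf => FSGraph.two_lt_card_isCritical_cone hp hH (by rw [hchi]; decide)
      (by rw [hchi]; decide) hf⟩
  have hsphere := (h3.2 p (Finset.mem_insert_self p _)).euler_eq
  rw [FSGraph.sphere_cone_apex, hchi] at hsphere
  norm_num at hsphere
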